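/- arXiv:2604.24192 — 5 statements merged into one kernel-verified Lean document; each statement's English description precedes it below -/
import Mathlib

section
/- Let n ≥ 3 be odd and let L be the Laplacian of the cycle C_n. Then per(L)² − per(L ∘ L) ≥ 2; in particular per(L ∘ L) ≤ per(L)² with strict inequality. -/
open Matrix Finset
open Fin.CommRing Fin.NatCast Fin.IntCast

/-- The Laplacian matrix of a simple graph, with real entries. -/
noncomputable def lap {V : Type*} [Fintype V] [DecidableEq V] (G : SimpleGraph V) :
    Matrix V V ℝ :=
  letI := Classical.decRel G.Adj
  G.lapMatrix ℝ

def Lmat (n : ℕ) [NeZero n] : Matrix (Fin n) (Fin n) ℝ :=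
  fun i j => if i = j then 2 else if i = j + 1 ∨ j = i + 1 then -1 else 0

lemma lap_eq (m : ℕ) : lap (SimpleGraph.cycleGraph (m + 3)) = Lmat (m + 3) := by
  ext i j
  classical
  unfold lap Lmat
  rw [SimpleGraph.lapMatrix]
  simp only [Matrix.sub_apply, SimpleGraph.degMatrix, Matrix.diagonal_apply,
    SimpleGraph.adjMatrix_apply]
  by_cases h : i = j
  · subst h
    have hd : (SimpleGraph.cycleGraph (m + 3)).degree i = 2 :=
      SimpleGraph.cycleGraph_degree_three_le
    have : ¬ (SimpleGraph.cycleGraph (m + 3)).Adj i i := SimpleGraph.irrefl _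
    rw [if_pos rfl, if_pos rfl, if_neg this, sub_zero]
    norm_cast
    convert hd using 2
  · have hadj : (SimpleGraph.cycleGraph (m + 3)).Adj i j ↔ (i = j + 1 ∨ j = i + 1) := by
      have := SimpleGraph.cycleGraph_adj (n := m + 1) (u := i) (v := j)
      rw [this, sub_eq_iff_eq_add, sub_eq_iff_eq_add]
      constructor
      · rintro (k | k) <;> [left; right] <;> exact k.trans (add_comm _ _)
      · rintro (k | k) <;> [left; right] <;> exact k.trans (add_comm _ _)
    simp only [h, if_false, hadj]
    by_cases h2 : i = j + 1 ∨ j = i + 1 <;> simp [h2]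

namespace CycleGap

variable {m : ℕ}

lemma fin1 : (1 : Fin (m+3)) ≠ 0 := by simp [Fin.ext_iff]
lemma fin2 : (2 : Fin (m+3)) ≠ 0 := by simp [Fin.ext_iff, Nat.mod_eq_of_lt (show 2 < m + 3 by omega)]

/-- weight of a permutation -/
noncomputable def w (m : ℕ) (σ : Equiv.Perm (Fin (m+3))) : ℝ :=
  ∏ i, Lmat (m+3) (σ i) i

/-- supported permutations -/
def supp (m : ℕ) (σ : Equiv.Perm (Fin (m+3))) : Prop :=
  ∀ i, σ i = i ∨ σ i = i + 1 ∨ σ i = i - 1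

lemma Lmat_diag (i : Fin (m+3)) : Lmat (m+3) i i = 2 := if_pos rfl

lemma Lmat_succ (i : Fin (m+3)) : Lmat (m+3) (i+1) i = -1 := by
  unfold Lmat
  rw [if_neg, if_pos (Or.inl rfl)]
  intro h
  exact fin1 (by linear_combination h)

lemma Lmat_pred (i : Fin (m+3)) : Lmat (m+3) (i-1) i = -1 := by
  unfold Lmat
  rw [if_neg, if_pos (Or.inr (by ring))]
  intro h
  exact fin1 (by linear_combination -h)

lemma Lmat_zero {i j : Fin (m+3)} (h1 : i ≠ j) (h2 : i ≠ j + 1) (h3 : i ≠ j - 1) :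
    Lmat (m+3) i j = 0 := by
  unfold Lmat
  rw [if_neg h1, if_neg]
  rintro (h | h)
  · exact h2 h
  · exact h3 (by linear_combination -h)

lemma w_eq_zero {σ : Equiv.Perm (Fin (m+3))} (h : ¬ supp m σ) : w m σ = 0 := by
  unfold supp at h
  push_neg at h
  obtain ⟨i, hi1, hi2, hi3⟩ := h
  exact Finset.prod_eq_zero (Finset.mem_univ i) (Lmat_zero hi1 hi2 hi3)

/-- the rotation classification -/
lemma rot_of_two {σ : Equiv.Perm (Fin (m+3))} (hσ : supp m σ) (i : Fin (m+3))
    (h1 : σ i = i + 1) (h2 : σ (i+1) = i + 1 + 1) : ∀ j, σ j = j + 1 := by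
  have key : ∀ k : ℕ, σ (i + k) = i + k + 1 ∧ σ (i + k + 1) = i + k + 1 + 1 := by
    intro k
    induction k with
    | zero => simpa using ⟨h1, h2⟩
    | succ k ih =>
      obtain ⟨ha, hb⟩ := ih
      have hcast : (i + (k+1 : ℕ) : Fin (m+3)) = i + k + 1 := by push_cast; ring
      rw [hcast]
      refine ⟨hb, ?_⟩
      rcases hσ (i + k + 1 + 1) with h | h | h
      · exfalso
        have := σ.injective (h.trans hb.symm)
        exact fin1 (by linear_combination this)
      · exact h
      · exfalso
        have heq : σ (i + k + 1 + 1) = σ (i + k) := by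
          rw [ha, h]; ring
        have := σ.injective heq
        exact fin2 (by linear_combination this)
  intro j
  have hj : i + ((j - i).val : Fin (m+3)) = j := by
    rw [Fin.cast_val_eq_self]; ring
  have := (key (j - i).val).1
  rwa [hj] at this

end CycleGap

namespace CycleGap
variable {m : ℕ}

lemma supp_inv {σ : Equiv.Perm (Fin (m+3))} (hσ : supp m σ) : supp m σ⁻¹ := by
  intro j
  have hj : σ (σ⁻¹ j) = j := σ.apply_symm_apply j
  rcases hσ (σ⁻¹ j) with h | h | h
  · exact Or.inl (h.symm.trans hj)
  · exact Or.inr (Or.inr (by linear_combination -(hj.symm.trans h)))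
  · exact Or.inr (Or.inl (by linear_combination -(hj.symm.trans h)))

lemma classify {σ : Equiv.Perm (Fin (m+3))} (hσ : supp m σ) :
    (∀ i, σ (σ i) = i) ∨ (∀ j, σ j = j + 1) ∨ (∀ j, σ j = j - 1) := by
  by_cases hinv : ∀ i, σ (σ i) = i
  · exact Or.inl hinv
  push_neg at hinv
  obtain ⟨i, hi⟩ := hinv
  rcases hσ i with h | h | h
  · exact absurd (by rw [h, h]) hi
  · -- σ i = i + 1; show σ (i+1) = i+1+1
    have hs : σ (i + 1) = i + 1 + 1 := by
      rcases hσ (i + 1) with h' | h' | h'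
      · exfalso
        have := σ.injective (h'.trans h.symm)
        exact fin1 (by linear_combination this)
      · exact h'
      · exfalso
        apply hi
        rw [h, h']
        ring
    exact Or.inr (Or.inl (rot_of_two hσ i h hs))
  · -- σ i = i - 1
    have hs : σ (i - 1) = i - 1 - 1 := by
      rcases hσ (i - 1) with h' | h' | h'
      · exfalso
        have := σ.injective (h'.trans h.symm)
        exact fin1 (by linear_combination -this)
      · exfalso
        apply hi
        rw [h, h']
        ring
      · exact h'
    -- apply rot_of_two to σ⁻¹ at base point i - 1 - 1
    have e1 : i - 1 - 1 + 1 = i - 1 := by ring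
    have e2 : i - 1 - 1 + 1 + 1 = i := by ring
    have hb1 : σ⁻¹ (i - 1 - 1) = i - 1 - 1 + 1 := by
      rw [e1, ← hs]
      exact σ.symm_apply_apply _
    have hb2 : σ⁻¹ (i - 1 - 1 + 1) = i - 1 - 1 + 1 + 1 := by
      rw [e2]
      rw [show i - 1 - 1 + 1 = i - 1 from e1, ← h]
      exact σ.symm_apply_apply _
    have hrot := rot_of_two (supp_inv hσ) (i - 1 - 1) hb1 hb2
    refine Or.inr (Or.inr (fun j => ?_))
    have hh := hrot (j - 1)
    have h1 : j - 1 + 1 = j := by ring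
    rw [h1] at hh
    exact ((congrArg σ hh).symm.trans (σ.apply_symm_apply (j-1)))

lemma w_invol {σ : Equiv.Perm (Fin (m+3))} (hσ : supp m σ) (hi : ∀ i, σ (σ i) = i) :
    w m σ = 2 ^ (Finset.univ.filter (fun i => σ i = i)).card := by
  unfold w
  rw [← Finset.prod_filter_mul_prod_filter_not Finset.univ (fun i => σ i = i)]
  have h1 : ∏ i ∈ Finset.univ.filter (fun i => σ i = i), Lmat (m+3) (σ i) i
      = 2 ^ (Finset.univ.filter (fun i => σ i = i)).card := by
    rw [Finset.prod_congr rfl (fun i hi' => ?_), Finset.prod_const]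
    rw [(Finset.mem_filter.mp hi').2, Lmat_diag]
  have h2 : ∏ i ∈ Finset.univ.filter (fun i => ¬ σ i = i), Lmat (m+3) (σ i) i = 1 := by
    rw [Finset.prod_congr rfl (g := fun _ => (-1 : ℝ)) (fun i hi' => ?_)]
    · refine Finset.prod_involution (fun a _ => σ a) (fun a ha => by norm_num)
        (fun a ha _ => (Finset.mem_filter.mp ha).2) (fun a ha => ?_) (fun a ha => hi a)
      · simp only [Finset.mem_filter, Finset.mem_univ, true_and] at ha ⊢
        rw [hi a]
        exact fun hcon => ha hcon.symm
    · have hne := (Finset.mem_filter.mp hi').2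
      rcases hσ i with h | h | h
      · exact absurd h hne
      · rw [h]; exact Lmat_succ i
      · rw [h]; exact Lmat_pred i
  rw [h1, h2, mul_one]

lemma w_one : w m 1 = 2 ^ (m+3) := by
  unfold w
  simp only [Equiv.Perm.one_apply, Lmat_diag]
  rw [Finset.prod_const, Finset.card_univ, Fintype.card_fin]

lemma w_rot (hodd : Odd (m+3)) : w m (Equiv.addRight (1 : Fin (m+3))) = -1 := by
  unfold w
  simp only [Equiv.coe_addRight, Lmat_succ]
  rw [Finset.prod_const, Finset.card_univ, Fintype.card_fin]
  exact hodd.neg_one_pow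

lemma w_rot' (hodd : Odd (m+3)) : w m (Equiv.addRight (-1 : Fin (m+3))) = -1 := by
  unfold w
  simp only [Equiv.coe_addRight]
  have : ∀ i : Fin (m+3), Lmat (m+3) (i + -1) i = -1 := by
    intro i
    rw [← sub_eq_add_neg]
    exact Lmat_pred i
  simp only [this]
  rw [Finset.prod_const, Finset.card_univ, Fintype.card_fin]
  exact hodd.neg_one_pow

lemma w_nonneg {σ : Equiv.Perm (Fin (m+3))}
    (h1 : σ ≠ Equiv.addRight (1 : Fin (m+3))) (h2 : σ ≠ Equiv.addRight (-1 : Fin (m+3))) :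
    0 ≤ w m σ := by
  by_cases hs : supp m σ
  · rcases classify hs with h | h | h
    · rw [w_invol hs h]; positivity
    · exact absurd (Equiv.ext h) h1
    · refine absurd (Equiv.ext fun j => ?_) h2
      rw [h j, sub_eq_add_neg]
      rfl
  · rw [w_eq_zero hs]

lemma supp_swap01 : supp m (Equiv.swap 0 1) := by
  intro i
  by_cases h0 : i = 0
  · subst h0
    right; left
    rw [Equiv.swap_apply_left, zero_add]
  by_cases h1 : i = 1
  · subst h1
    right; right
    rw [Equiv.swap_apply_right, sub_self]
  · left; exact Equiv.swap_apply_of_ne_of_ne h0 h1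

lemma supp_swap12 : supp m (Equiv.swap 1 2) := by
  intro i
  by_cases h0 : i = 1
  · subst h0
    right; left
    rw [Equiv.swap_apply_left]
    norm_num
  by_cases h1 : i = 2
  · subst h1
    right; right
    rw [Equiv.swap_apply_right]
    norm_num
  · left; exact Equiv.swap_apply_of_ne_of_ne h0 h1

lemma two_le_w_swap {x y z : Fin (m+3)} (hsupp : supp m (Equiv.swap x y))
    (hzx : z ≠ x) (hzy : z ≠ y) : 2 ≤ w m (Equiv.swap x y) := by
  rw [w_invol hsupp (fun i => Equiv.swap_apply_self x y i)]
  have hz : z ∈ Finset.univ.filter (fun i => Equiv.swap x y i = i) := by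
    simp [Equiv.swap_apply_of_ne_of_ne hzx hzy]
  have hcard : 1 ≤ (Finset.univ.filter (fun i => Equiv.swap x y i = i)).card :=
    Finset.card_pos.mpr ⟨z, hz⟩
  calc (2:ℝ) = 2 ^ 1 := (pow_one 2).symm
  _ ≤ 2 ^ (Finset.univ.filter (fun i => Equiv.swap x y i = i)).card := by
      exact pow_le_pow_right₀ one_le_two hcard

end CycleGap

namespace CycleGap
variable {m : ℕ}

lemma perm_eq : (Lmat (m+3)).permanent = ∑ σ : Equiv.Perm (Fin (m+3)), w m σ := rfl

lemma perm_had_eq :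
    (Matrix.hadamard (Lmat (m+3)) (Lmat (m+3))).permanent
      = ∑ σ : Equiv.Perm (Fin (m+3)), (w m σ) ^ 2 := by
  unfold Matrix.permanent w
  refine Finset.sum_congr rfl (fun σ _ => ?_)
  rw [sq, ← Finset.prod_mul_distrib]
  rfl

lemma main (hodd : Odd (m+3)) :
    (Lmat (m+3)).permanent ^ 2
        - (Matrix.hadamard (Lmat (m+3)) (Lmat (m+3))).permanent ≥ 2 := by
  classical
  set r : Equiv.Perm (Fin (m+3)) := Equiv.addRight (1 : Fin (m+3)) with hr
  set r' : Equiv.Perm (Fin (m+3)) := Equiv.addRight (-1 : Fin (m+3)) with hr'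
  have h20 : (2 : Fin (m+3)) ≠ 0 := fin2
  have h21 : (2 : Fin (m+3)) ≠ 1 := by simp [Fin.ext_iff, Nat.mod_eq_of_lt (show 2 < m + 3 by omega)]
  have h01 : (0 : Fin (m+3)) ≠ 1 := by simp [Fin.ext_iff]
  have h02 : (0 : Fin (m+3)) ≠ 2 := by simp [Fin.ext_iff, Nat.mod_eq_of_lt (show 2 < m + 3 by omega)]
  have hr0 : r 0 = 1 := by rw [hr]; simp
  have hr2 : r 2 = 2 + 1 := by rw [hr]; simp
  have hr'0 : r' 0 = -1 := by rw [hr']; simp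
  have hr'2 : r' 2 = 2 + -1 := by rw [hr']; simp
  set a : Equiv.Perm (Fin (m+3)) := Equiv.swap 0 1 with ha
  set b : Equiv.Perm (Fin (m+3)) := Equiv.swap 1 2 with hb
  have ha0 : a 0 = 1 := Equiv.swap_apply_left 0 1
  have ha2 : a 2 = 2 := Equiv.swap_apply_of_ne_of_ne h20 h21
  have hb0 : b 0 = 0 := Equiv.swap_apply_of_ne_of_ne h01 h02
  have hb1 : b 1 = 2 := Equiv.swap_apply_left 1 2
  have h1r : (1 : Equiv.Perm (Fin (m+3))) ≠ r := fun h => by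
    have := DFunLike.congr_fun h 0
    rw [hr0] at this
    simp only [Equiv.Perm.one_apply] at this
    exact h01 this
  have h1r' : (1 : Equiv.Perm (Fin (m+3))) ≠ r' := fun h => by
    have := DFunLike.congr_fun h 0
    rw [hr'0] at this
    simp only [Equiv.Perm.one_apply] at this
    exact fin1 (by linear_combination this)
  have hrr' : r ≠ r' := fun h => by
    have := DFunLike.congr_fun h 0
    rw [hr0, hr'0] at this
    exact fin2 (by linear_combination this)
  have har : a ≠ r := fun h => by
    have := DFunLike.congr_fun h 2
    rw [ha2, hr2] at this
    exact fin1 (by linear_combination -this)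
  have har' : a ≠ r' := fun h => by
    have := DFunLike.congr_fun h 2
    rw [ha2, hr'2] at this
    exact fin1 (by linear_combination this)
  have ha1 : a ≠ 1 := fun h => by
    have := DFunLike.congr_fun h 0
    rw [ha0] at this
    simp only [Equiv.Perm.one_apply] at this
    exact fin1 (by linear_combination this)
  have hbr : b ≠ r := fun h => by
    have := DFunLike.congr_fun h 0
    rw [hb0, hr0] at this
    exact fin1 (by linear_combination -this)
  have hbr' : b ≠ r' := fun h => by
    have := DFunLike.congr_fun h 0
    rw [hb0, hr'0] at this
    exact fin1 (by linear_combination this)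
  have hb1' : b ≠ 1 := fun h => by
    have := DFunLike.congr_fun h 1
    rw [hb1] at this
    simp only [Equiv.Perm.one_apply] at this
    exact h21 this
  have hab : a ≠ b := fun h => by
    have := DFunLike.congr_fun h 0
    rw [ha0, hb0] at this
    exact fin1 (by linear_combination this)
  set T : Finset (Equiv.Perm (Fin (m+3))) := {1, r, r'} with hT
  set S : Finset (Equiv.Perm (Fin (m+3))) := Finset.univ \ T with hS
  have hsplit : ∀ f : Equiv.Perm (Fin (m+3)) → ℝ,
      ∑ σ : Equiv.Perm (Fin (m+3)), f σ = ∑ σ ∈ S, f σ + (f 1 + f r + f r') := by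
    intro f
    rw [hS, ← Finset.sum_sdiff (Finset.subset_univ T)]
    congr 1
    rw [hT]
    rw [Finset.sum_insert (by simp [h1r, h1r']), Finset.sum_pair hrr']
    ring
  -- nonnegativity on S
  have hSne : ∀ σ ∈ S, σ ≠ r ∧ σ ≠ r' := by
    intro σ hσ
    rw [hS, Finset.mem_sdiff, hT] at hσ
    simp only [Finset.mem_insert, Finset.mem_singleton, not_or] at hσ
    exact ⟨hσ.2.2.1, hσ.2.2.2⟩
  have hSnonneg : ∀ σ ∈ S, 0 ≤ w m σ := fun σ hσ =>
    w_nonneg (hSne σ hσ).1 (hSne σ hσ).2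
  -- lower bound for P
  set P : ℝ := ∑ σ ∈ S, w m σ with hP
  set Q : ℝ := ∑ σ ∈ S, (w m σ) ^ 2 with hQ
  have habS : ({a, b} : Finset (Equiv.Perm (Fin (m+3)))) ⊆ S := by
    intro σ hσ
    rw [hS, Finset.mem_sdiff, hT]
    simp only [Finset.mem_insert, Finset.mem_singleton, not_or] at hσ ⊢
    constructor
    · exact Finset.mem_univ σ
    · rcases hσ with h | h <;> subst h
      · exact ⟨ha1, har, har'⟩
      · exact ⟨hb1', hbr, hbr'⟩
  have hP4 : 4 ≤ P := by
    have hsum : ∑ σ ∈ ({a, b} : Finset (Equiv.Perm (Fin (m+3)))), w m σ ≤ P :=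
      Finset.sum_le_sum_of_subset_of_nonneg habS (fun σ hσ _ => hSnonneg σ hσ)
    rw [Finset.sum_pair hab] at hsum
    have hwa : 2 ≤ w m a := two_le_w_swap supp_swap01 h20 h21
    have hwb : 2 ≤ w m b := two_le_w_swap supp_swap12 h01 h02
    linarith
  have hQP : Q ≤ P ^ 2 := Finset.sum_sq_le_sq_sum_of_nonneg hSnonneg
  have hQ0 : 0 ≤ Q := Finset.sum_nonneg (fun σ hσ => sq_nonneg _)
  -- compute the permanents
  have hperL : (Lmat (m+3)).permanent = P + (2 ^ (m+3) - 2) := by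
    rw [perm_eq, hsplit (w m), w_one, w_rot hodd, w_rot' hodd]
    ring
  have hperH : (Matrix.hadamard (Lmat (m+3)) (Lmat (m+3))).permanent
      = Q + ((2 ^ (m+3)) ^ 2 + 2) := by
    rw [perm_had_eq, hsplit (fun σ => (w m σ)^2), w_one, w_rot hodd, w_rot' hodd]
    ring
  have hA : (8:ℝ) ≤ 2 ^ (m+3) := by
    calc (8:ℝ) = 2 ^ 3 := by norm_num
    _ ≤ 2 ^ (m+3) := pow_le_pow_right₀ one_le_two (by omega)
  rw [hperL, hperH, ge_iff_le]
  nlinarith [hP4, hQP, hA, sq_nonneg (P - 4)]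

end CycleGap

/-- For odd cycles `C_n` (`n ≥ 3` odd), `per(L)² − per(L ∘ L) ≥ 2`; in particular
`per(L ∘ L) < per(L)²`. -/
theorem cycle_permanent_gap (n : ℕ) (hn : 3 ≤ n) (hodd : Odd n) :
    (lap (SimpleGraph.cycleGraph n)).permanent ^ 2 -
        (Matrix.hadamard (lap (SimpleGraph.cycleGraph n))
          (lap (SimpleGraph.cycleGraph n))).permanent ≥ 2 ∧
      (Matrix.hadamard (lap (SimpleGraph.cycleGraph n))
          (lap (SimpleGraph.cycleGraph n))).permanent <
        (lap (SimpleGraph.cycleGraph n)).permanent ^ 2 := by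
  obtain ⟨m, rfl⟩ : ∃ m, n = m + 3 := ⟨n - 3, by omega⟩
  rw [lap_eq]
  have h := CycleGap.main (m := m) hodd
  exact ⟨h, by linarith⟩
end

section
/- Let n ≥ 2 and s ≥ 1 be integers and let M = n·I_s − J_s, the s×s matrix with diagonal entries n−1 and off-diagonal entries −1. Then per(M) = (−1)^s · s! · Σ_{r=0}^{s} (−n)^r / r!. -/
/-!
The entry `(σ i, i)` of `n • 1 - J` is `-(1 - n·[σ i = i])`, so the term of `σ` in the permanent is
`(-1)^s (1 - n)^f(σ)` with `f(σ)` the number of fixed points. Expanding `(1 + x)^f(σ)` over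
the sets `T` of fixed points and swapping the sums, each `T` is fixed pointwise by `(s - |T|)!`
permutations, so the coefficient of `x^r` is `C(s, r) (s - r)! = s! / r!`.
-/

open Finset Equiv Matrix
open scoped Nat

section

variable {α : Type*} [Fintype α] [DecidableEq α]

theorem card_perm_fixing_pointwise (T : Finset α) :
    #{σ : Perm α | ∀ i ∈ T, σ i = i} = (Fintype.card α - #T)! := by
  rw [← Fintype.card_subtype]
  have e : {σ : Perm α // ∀ i ∈ T, σ i = i} ≃ Perm {a // a ∉ T} :=
    (subtypeEquivRight fun σ => by simp only [not_not]).trans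
      (Perm.subtypeEquivSubtypePerm (· ∉ T)).symm
  rw [Fintype.card_congr e, Fintype.card_perm, Fintype.card_subtype_compl, Fintype.card_coe]

theorem sum_perm_add_one_pow_card_fixed {R : Type*} [CommSemiring R] (x : R) :
    ∑ σ : Perm α, (x + 1) ^ #{i | σ i = i} =
      ∑ r ∈ range (Fintype.card α + 1),
        ((Fintype.card α).choose r * (Fintype.card α - r)! : ℕ) * x ^ r := by
  have binomial (σ : Perm α) :
      (x + 1) ^ #{i | σ i = i} = ∑ T ∈ ({i | σ i = i} : Finset α).powerset, x ^ #T := by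
    simp [← sum_pow_mul_eq_add_pow]
  simp_rw [binomial]
  rw [sum_comm' (t' := univ) (s' := fun T => {σ : Perm α | ∀ i ∈ T, σ i = i})
    (fun σ T => by simp [subset_iff])]
  simp_rw [sum_const, card_perm_fixing_pointwise]
  rw [← powerset_univ, sum_powerset_apply_card (fun r => (Fintype.card α - r)! • x ^ r),
    card_univ]
  simp [nsmul_eq_mul, mul_assoc]

theorem permanent_smul_one_sub_of_one {R : Type*} [CommRing R] (a : R) :
    (a • 1 - of fun _ _ => 1 : Matrix α α R).permanent =
      (-1) ^ Fintype.card α * ∑ σ : Perm α, (-a + 1) ^ #{i | σ i = i} := by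
  rw [permanent, mul_sum]
  refine sum_congr rfl fun σ _ => ?_
  have entry (i : α) : (a • 1 - of fun _ _ => 1 : Matrix α α R) (σ i) i =
      -1 * if σ i = i then -a + 1 else 1 := by
    split_ifs with h
    · simp [h]
      ring
    · simp [h, one_apply]
  simp_rw [entry, prod_mul_distrib, prod_ite, prod_const_one, mul_one, prod_const, card_univ]

end

theorem permanent_nI_sub_J_general (n s : ℕ) :
    ((n : ℚ) • (1 : Matrix (Fin s) (Fin s) ℚ) -
        Matrix.of (fun _ _ => (1 : ℚ))).permanent =
      (-1 : ℚ) ^ s * (Nat.factorial s : ℚ) *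
        ∑ r ∈ Finset.range (s + 1), (-(n : ℚ)) ^ r / (Nat.factorial r : ℚ) := by
  rw [permanent_smul_one_sub_of_one, sum_perm_add_one_pow_card_fixed, Fintype.card_fin,
    mul_assoc]
  congr 1
  rw [mul_sum]
  refine sum_congr rfl fun r hr => ?_
  rw [Nat.cast_mul, Nat.cast_choose ℚ (Nat.lt_succ_iff.mp (mem_range.mp hr))]
  field_simp

/-- For `M = n·I_s − J_s`, `per(M) = (−1)^s s! Σ_{r=0}^s (−n)^r / r!`. -/
theorem permanent_nI_sub_J (n s : ℕ) (hn : 2 ≤ n) (hs : 1 ≤ s) :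
    ((n : ℚ) • (1 : Matrix (Fin s) (Fin s) ℚ) -
        Matrix.of (fun _ _ => (1 : ℚ))).permanent =
      (-1 : ℚ) ^ s * (Nat.factorial s : ℚ) *
        ∑ r ∈ Finset.range (s + 1), (-(n : ℚ)) ^ r / (Nat.factorial r : ℚ) :=
  permanent_nI_sub_J_general n s
end

section
/- Let n ≥ 2 and s ≥ 1 be integers and M = n·I_s − J_s. Then per(M ∘ M) = s! · Σ_{r=0}^{s} (n(n−2))^r / r!, where M ∘ M is the entrywise square of M. -/
/-!
The entrywise square of `n • 1 - J` is `c • 1 + J` with `c = n (n - 2)`. Expanding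
`∏ i, (c [σ i = i] + 1)` turns the permanent into a sum, over sets `t` and permutations fixing `t`
pointwise, of `c ^ #t`; there are `(s - #t)!` such permutations, so the permanent is
`∑ k, C(s, k) (s - k)! c ^ k = s! ∑ k, c ^ k / k!`.
-/

open Matrix Finset Equiv Nat

theorem Equiv.Perm.card_filter_forall_mem_apply_eq {α : Type*} [Fintype α] [DecidableEq α]
    (t : Finset α) : #{σ : Perm α | ∀ i ∈ t, σ i = i} = (Fintype.card α - #t)! := by
  have e : {σ : Perm α // ∀ i ∈ t, σ i = i} ≃ Perm {a // a ∉ t} :=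
    (subtypeEquivRight fun σ => ⟨fun h a ha => h a (not_not.mp ha),
      fun h i hi => h i (not_not.mpr hi)⟩).trans (Perm.subtypeEquivSubtypePerm _).symm
  rw [← Fintype.card_subtype, Fintype.card_congr e, Fintype.card_perm,
    Fintype.card_subtype_compl, Fintype.card_coe]

theorem Matrix.permanent_smul_one_add_of_one {ι R : Type*} [Fintype ι] [DecidableEq ι]
    [CommSemiring R] (c : R) :
    (c • 1 + of fun _ _ => 1 : Matrix ι ι R).permanent =
      ∑ k ∈ range (Fintype.card ι + 1),
        ((Fintype.card ι).choose k * (Fintype.card ι - k)! : R) * c ^ k := by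
  have expand (σ : Perm ι) : ∏ i, (c • 1 + of fun _ _ => 1 : Matrix ι ι R) (σ i) i =
      ∑ t ∈ univ.powerset, if ∀ i ∈ t, σ i = i then c ^ #t else 0 := by
    simp only [add_apply, smul_apply, one_apply, smul_eq_mul, mul_ite, mul_one, mul_zero,
      of_apply, prod_add, prod_const_one]
    refine sum_congr rfl fun t _ => ?_
    split_ifs with h
    · exact (prod_congr rfl fun i hi => if_pos (h i hi)).trans (prod_const c)
    · obtain ⟨i, hi, hne⟩ := not_forall₂.mp h
      exact prod_eq_zero hi (if_neg hne)
  simp_rw [permanent, expand]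
  rw [sum_comm]
  simp_rw [← sum_filter, sum_const, Perm.card_filter_forall_mem_apply_eq, nsmul_eq_mul]
  rw [sum_powerset_apply_card fun k => ((Fintype.card ι - k)! : R) * c ^ k, Finset.card_univ]
  simp_rw [nsmul_eq_mul, mul_assoc]

theorem Matrix.hadamard_self_smul_one_sub_of_one {ι R : Type*} [DecidableEq ι] [CommRing R]
    (a : R) :
    (a • 1 - of fun _ _ => 1 : Matrix ι ι R) ⊙ (a • 1 - of fun _ _ => 1) =
      (a * (a - 2)) • 1 + of fun _ _ => 1 := by
  ext i j
  by_cases h : i = j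
  · simp only [h, hadamard_apply, sub_apply, smul_apply, one_apply_eq, smul_eq_mul, mul_one,
      of_apply, add_apply]
    ring
  · simp [h]

theorem permanent_hadamard_nI_sub_J_general (n s : ℕ) :
    (Matrix.hadamard
        ((n : ℚ) • (1 : Matrix (Fin s) (Fin s) ℚ) - Matrix.of (fun _ _ => (1 : ℚ)))
        ((n : ℚ) • (1 : Matrix (Fin s) (Fin s) ℚ) - Matrix.of (fun _ _ => (1 : ℚ)))).permanent =
      (Nat.factorial s : ℚ) *
        ∑ r ∈ Finset.range (s + 1),
          ((n : ℚ) * ((n : ℚ) - 2)) ^ r / (Nat.factorial r : ℚ) := by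
  rw [hadamard_self_smul_one_sub_of_one, permanent_smul_one_add_of_one, Fintype.card_fin,
    mul_sum]
  refine sum_congr rfl fun r hr => ?_
  rw [cast_choose ℚ (mem_range_succ_iff.mp hr)]
  field_simp

/-- For `M = n·I_s − J_s`, the entrywise square satisfies
`per(M ∘ M) = s! Σ_{r=0}^s (n(n−2))^r / r!`. -/
theorem permanent_hadamard_nI_sub_J (n s : ℕ) (hn : 2 ≤ n) (hs : 1 ≤ s) :
    (Matrix.hadamard
        ((n : ℚ) • (1 : Matrix (Fin s) (Fin s) ℚ) - Matrix.of (fun _ _ => (1 : ℚ)))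
        ((n : ℚ) • (1 : Matrix (Fin s) (Fin s) ℚ) - Matrix.of (fun _ _ => (1 : ℚ)))).permanent =
      (Nat.factorial s : ℚ) *
        ∑ r ∈ Finset.range (s + 1),
          ((n : ℚ) * ((n : ℚ) - 2)) ^ r / (Nat.factorial r : ℚ) :=
  permanent_hadamard_nI_sub_J_general n s
end

section
/- Let n ≥ 2 be an integer and m ∈ {n−1, n}. Then Σ_{k=0}^{m} (n(n−2))^k / k! ≤ m! · (Σ_{k=0}^{m} (−n)^k / k!)². -/
set_option maxHeartbeats 16000000



private def rr (n : ℕ) : ℕ → ℚ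
  | 0 => 1
  | m + 1 => 1 - ((m + 1 : ℕ) : ℚ) / (n : ℚ) * rr n m

private def ee (n : ℕ) : ℕ → ℚ
  | 0 => 0
  | m + 1 => ((m + 1 : ℕ) : ℚ) / (n : ℚ) * ee n m
      + ((m + 1 : ℕ) : ℚ) / (((n + m : ℕ) : ℚ) * ((n + m + 1 : ℕ) : ℚ))

private def sg (n : ℕ) : ℕ → ℚ
  | 0 => 0
  | m + 1 => ((m + 1 : ℕ) : ℚ) / (n : ℚ) * sg n m + 1

private lemma sum_eq_rr (n : ℕ) (hn : 1 ≤ n) (m : ℕ) :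
    ∑ k ∈ Finset.range (m + 1), (-(n : ℚ)) ^ k / (Nat.factorial k : ℚ)
      = (-1) ^ m * (n : ℚ) ^ m * rr n m / (Nat.factorial m : ℚ) := by
  have hn0 : (n : ℚ) ≠ 0 := by positivity
  induction m with
  | zero => simp [rr]
  | succ m ih =>
      rw [Finset.sum_range_succ, ih]
      have hf : ((Nat.factorial m : ℚ)) ≠ 0 := by positivity
      have hf1 : ((Nat.factorial (m+1) : ℚ)) ≠ 0 := by positivity
      rw [rr, Nat.factorial_succ]
      push_cast
      field_simp
      ring

private lemma geom_bound (x q : ℚ) (hx : 0 < x) (hq0 : 0 ≤ q) (hq1 : q < 1) :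
    ∀ m : ℕ, (∀ k : ℕ, k ≤ m → (k : ℚ) ≤ q * x) →
      ∑ k ∈ Finset.range (m + 1), x ^ k / (Nat.factorial k : ℚ)
        ≤ x ^ m / (Nat.factorial m : ℚ) * (1 / (1 - q)) := by
  have e1 : (0:ℚ) < 1 - q := by linarith
  intro m
  induction m with
  | zero =>
      intro _
      rw [show 0 + 1 = 1 from rfl, Finset.sum_range_one]
      simp only [pow_zero, Nat.factorial_zero]
      have h0 : (1 - q) * (1 - q)⁻¹ = 1 := mul_inv_cancel₀ (ne_of_gt e1)
      have h2 : (0:ℚ) < (1 - q)⁻¹ := inv_pos.mpr e1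
      rw [Nat.cast_one, div_one, one_div]
      nlinarith
  | succ m ih =>
      intro h
      rw [Finset.sum_range_succ]
      have h1 := ih (fun k hk => h k (le_trans hk (Nat.le_succ m)))
      set A := x ^ m / (Nat.factorial m : ℚ) with hA
      set B := x ^ (m+1) / (Nat.factorial (m+1) : ℚ) with hB
      have hf : (0:ℚ) < (Nat.factorial m : ℚ) := by positivity
      have hfs : ((Nat.factorial (m+1) : ℚ)) = ((m+1:ℕ):ℚ) * (Nat.factorial m : ℚ) := by
        rw [Nat.factorial_succ]; push_cast; ring
      have hm1 : ((m+1 : ℕ) : ℚ) ≤ q * x := h (m+1) le_rfl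
      have hBpos : (0:ℚ) ≤ B := by rw [hB]; positivity
      have base : A ≤ q * B := by
        have hmp : (0:ℚ) < ((m+1:ℕ):ℚ) := by positivity
        have hd : q * B - A = (q * x - ((m+1:ℕ):ℚ)) * x ^ m / (((m+1:ℕ):ℚ) * (Nat.factorial m : ℚ)) := by
          rw [hA, hB, hfs, pow_succ]
          field_simp
        have : (0:ℚ) ≤ q * B - A := by
          rw [hd]
          apply div_nonneg (mul_nonneg (by linarith) (le_of_lt (pow_pos hx m))) (by positivity)
        linarith
      have h2 : A + B * (1 - q) ≤ B := by nlinarith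
      have key : A * (1 / (1 - q)) + B ≤ B * (1 / (1 - q)) := by
        have : A * (1 / (1 - q)) + B = (A + B * (1 - q)) * (1 / (1 - q)) := by
          field_simp
        rw [this]
        exact mul_le_mul_of_nonneg_right h2 (by positivity)
      linarith


private lemma rr_center (n : ℕ) (hn : 1 ≤ n) (m : ℕ) :
    (n : ℚ) / ((n : ℚ) + (m : ℚ)) - ee n m ≤ rr n m ∧
      rr n m ≤ (n : ℚ) / ((n : ℚ) + (m : ℚ)) + ee n m := by
  have hn0 : (0:ℚ) < (n : ℚ) := by exact_mod_cast hn
  induction m with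
  | zero => simp [rr, ee, div_self (ne_of_gt hn0)]
  | succ m ih =>
      obtain ⟨ih1, ih2⟩ := ih
      have hnm : (0:ℚ) < (n : ℚ) + (m : ℚ) := by positivity
      have hnm1 : (0:ℚ) < (n : ℚ) + (m : ℚ) + 1 := by positivity
      have hmp : (0:ℚ) ≤ ((m+1 : ℕ) : ℚ) := by positivity
      -- drift identity
      have drift : 1 - ((m+1 : ℕ) : ℚ) / (n : ℚ) * ((n : ℚ) / ((n : ℚ) + (m : ℚ)))
          = (n : ℚ) / ((n : ℚ) + ((m:ℚ) + 1))
            - ((m+1 : ℕ) : ℚ) / ((((n + m : ℕ)) : ℚ) * (((n + m + 1 : ℕ)) : ℚ)) := by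
        push_cast
        field_simp
        ring
      have hcoef : (0:ℚ) ≤ ((m+1 : ℕ) : ℚ) / (n : ℚ) := by positivity
      have hd0 : (0:ℚ) ≤ ((m:ℚ)+1) / ((((n:ℚ))+(m:ℚ)) * (((n:ℚ))+(m:ℚ)+1)) := by positivity
      constructor
      · rw [rr, ee]
        have h2 := mul_le_mul_of_nonneg_left ih2 hcoef
        rw [mul_add] at h2
        push_cast at drift h2 ⊢
        linarith
      · rw [rr, ee]
        have h1 := mul_le_mul_of_nonneg_left ih1 hcoef
        rw [mul_sub] at h1
        push_cast at drift h1 ⊢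
        linarith [hd0]

private lemma ee_le_sg (n : ℕ) (hn : 1 ≤ n) :
    ∀ m : ℕ, m ≤ n → ee n m ≤ 1 / (2 * (2 * (n:ℚ) - 1)) * sg n m := by
  have hn0 : (0:ℚ) < (n : ℚ) := by exact_mod_cast hn
  have hD : (0:ℚ) < 2 * (2 * (n:ℚ) - 1) := by
    have : (1:ℚ) ≤ (n:ℚ) := by exact_mod_cast hn
    nlinarith
  intro m
  induction m with
  | zero => intro _; simp [ee, sg]
  | succ m ih =>
      intro hm
      have ihm := ih (le_trans (Nat.le_succ m) hm)
      rw [ee, sg]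
      have hcoef : (0:ℚ) ≤ ((m+1 : ℕ) : ℚ) / (n : ℚ) := by positivity
      have h1 := mul_le_mul_of_nonneg_left ihm hcoef
      -- d_{m+1} ≤ D : (m+1)/((n+m)(n+m+1)) ≤ 1/(2(2n-1)), from (n-(m+1))(n-m-2)≥0... 
      -- i.e. 2(m+1)(2n-1) ≤ (n+m)(n+m+1) given m+1 ≤ n
      have hmn : ((m:ℚ) + 1) ≤ (n:ℚ) := by exact_mod_cast hm
      have hd : ((m+1 : ℕ) : ℚ) / (((n + m : ℕ) : ℚ) * ((n + m + 1 : ℕ) : ℚ))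
          ≤ 1 / (2 * (2 * (n:ℚ) - 1)) := by
        have hprod : (0:ℚ) < ((n:ℚ) + (m:ℚ)) * ((n:ℚ) + (m:ℚ) + 1) := by positivity
        push_cast
        rw [div_le_div_iff₀ hprod hD]
        rcases eq_or_lt_of_le hm with h | h
        · have hq : (n:ℚ) = (m:ℚ) + 1 := by rw [← h]; push_cast; ring
          nlinarith [hq]
        · have hq : ((m:ℚ)) + 2 ≤ (n:ℚ) := by exact_mod_cast h
          nlinarith [mul_nonneg (by linarith : (0:ℚ) ≤ (n:ℚ) - (m:ℚ) - 2)
            (by linarith : (0:ℚ) ≤ (n:ℚ) - (m:ℚ) - 1)]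
      push_cast at h1 hd ⊢
      ring_nf at h1 hd ⊢
      nlinarith [h1, hd]


private lemma gstep (nq s v : ℚ) (hs : 6 ≤ s) (h1 : s^2 ≤ nq) (h2 : nq ≤ s^2 + 2*s)
    (hv : 0 ≤ v) (hv2 : v + 1 ≤ nq) :
    ((nq - v)/nq) * ((5*nq + 2*(v+1)*s)/(2*(v+1+s))) + 1 ≤ (5*nq + 2*v*s)/(2*(v+s)) := by
  have h36 : (36:ℚ) ≤ s^2 := by nlinarith
  have hn0 : (0:ℚ) < nq := by linarith
  have hvs : (0:ℚ) < v + s := by linarith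
  have hvs1 : (0:ℚ) < v + 1 + s := by linarith
  have hs2 : (0:ℚ) ≤ nq - 2*s := by nlinarith
  have c0 : (0:ℚ) ≤ 5*nq^2 - 4*nq*s^2 - 2*nq*s := by
    nlinarith [mul_nonneg hn0.le (sub_nonneg.mpr h1), mul_nonneg hn0.le hs2]
  have c1 : (0:ℚ) ≤ nq*s + 2*s^2 - 2*nq := by nlinarith
  have hG : (0:ℚ) ≤ 2*s*v^3 + (3*nq + 2*s + 2*s^2)*v^2 + (nq*s + 2*s^2 - 2*nq)*v
      + (5*nq^2 - 4*nq*s^2 - 2*nq*s) := by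
    have h3 : (0:ℚ) ≤ 2*s*v^3 := by positivity
    have h4 : (0:ℚ) ≤ (3*nq + 2*s + 2*s^2)*v^2 := by positivity
    have h5 : (0:ℚ) ≤ (nq*s + 2*s^2 - 2*nq)*v := mul_nonneg c1 hv
    linarith
  have key : (5*nq + 2*v*s)/(2*(v+s))
      - (((nq - v)/nq) * ((5*nq + 2*(v+1)*s)/(2*(v+1+s))) + 1)
      = (2*s*v^3 + (3*nq + 2*s + 2*s^2)*v^2 + (nq*s + 2*s^2 - 2*nq)*v
          + (5*nq^2 - 4*nq*s^2 - 2*nq*s)) / (2*nq*(v+s)*(v+1+s)) := by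
    field_simp
    ring
  have : (0:ℚ) ≤ (5*nq + 2*v*s)/(2*(v+s))
      - (((nq - v)/nq) * ((5*nq + 2*(v+1)*s)/(2*(v+1+s))) + 1) := by
    rw [key]
    positivity
  linarith

private lemma sg_le (n : ℕ) (hn : 36 ≤ n) : ∀ m : ℕ, m ≤ n →
    sg n m ≤ (5*(n:ℚ) + 2*(((n - m : ℕ)):ℚ)*((Nat.sqrt n : ℕ):ℚ))
      / (2*((((n - m : ℕ)):ℚ) + ((Nat.sqrt n : ℕ):ℚ))) := by
  set s := Nat.sqrt n with hsdef
  have hs6 : 6 ≤ s := Nat.le_sqrt.mpr (by omega)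
  have hA : s * s ≤ n := Nat.sqrt_le n
  have hB : n < (s+1) * (s+1) := Nat.lt_succ_sqrt n
  have hsq : ((s:ℚ))^2 ≤ (n:ℚ) := by
    have : ((s*s : ℕ):ℚ) ≤ (n:ℚ) := by exact_mod_cast hA
    push_cast at this
    nlinarith [this]
  have hsq2 : (n:ℚ) ≤ ((s:ℚ))^2 + 2*(s:ℚ) := by
    have e : (s+1)*(s+1) = s*s+2*s+1 := by ring
    rw [e] at hB
    have h3 : n ≤ s*s + 2*s := by omega
    have : ((n:ℕ):ℚ) ≤ ((s*s + 2*s : ℕ):ℚ) := by exact_mod_cast h3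
    push_cast at this
    nlinarith [this]
  have hsq6 : (6:ℚ) ≤ (s:ℚ) := by exact_mod_cast hs6
  intro m
  induction m with
  | zero =>
      intro _
      rw [sg]
      apply div_nonneg (by positivity) (by positivity)
  | succ m ih =>
      intro hm
      have ihm := ih (le_trans (Nat.le_succ m) hm)
      rw [sg]
      have hcoef : (0:ℚ) ≤ ((m+1 : ℕ) : ℚ) / (n : ℚ) := by positivity
      have h1 := mul_le_mul_of_nonneg_left ihm hcoef
      -- set v = n - (m+1)
      have hv1 : ((n - m : ℕ) : ℚ) = ((n - (m+1) : ℕ) : ℚ) + 1 := by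
        have : n - m = (n - (m+1)) + 1 := by omega
        rw [this]; push_cast; ring
      have hcoef2 : ((m+1 : ℕ) : ℚ) = (n:ℚ) - ((n - (m+1) : ℕ) : ℚ) := by
        have h' : ((n - (m+1) : ℕ) : ℚ) = (n:ℚ) - ((m+1 : ℕ):ℚ) := by
          rw [Nat.cast_sub hm]
        rw [h']; ring
      set v := ((n - (m+1) : ℕ) : ℚ) with hv
      have hv0 : (0:ℚ) ≤ v := by positivity
      have hv2 : v + 1 ≤ (n:ℚ) := by
        rw [hv]
        have : (n - (m+1)) + 1 ≤ n := by omega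
        exact_mod_cast this
      have step := gstep (n:ℚ) (s:ℚ) v hsq6 hsq hsq2 hv0 hv2
      calc ((m+1 : ℕ) : ℚ) / (n : ℚ) * sg n m + 1
          ≤ ((m+1 : ℕ) : ℚ) / (n : ℚ)
            * ((5*(n:ℚ) + 2*(((n - m : ℕ)):ℚ)*((s:ℕ):ℚ))
              / (2*((((n - m : ℕ)):ℚ) + ((s:ℕ):ℚ)))) + 1 := by linarith
        _ = ((n:ℚ) - v)/(n:ℚ) * ((5*(n:ℚ) + 2*(v+1)*(s:ℚ))/(2*(v+1+(s:ℚ)))) + 1 := by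
              rw [hv1, hcoef2]
        _ ≤ (5*(n:ℚ) + 2*v*(s:ℚ))/(2*(v+(s:ℚ))) := step


private lemma bern4 : ∀ n : ℕ, 4 ≤ n → ∀ x : ℚ, 0 ≤ x →
    1 + (n:ℚ)*x + (n:ℚ)*((n:ℚ)-1)/2*x^2 + (n:ℚ)*((n:ℚ)-1)*((n:ℚ)-2)/6*x^3
      + (n:ℚ)*((n:ℚ)-1)*((n:ℚ)-2)*((n:ℚ)-3)/24*x^4 ≤ (1+x)^n := by
  intro n hn
  induction n, hn using Nat.le_induction with
  | base =>
      intro x hx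
      have h : (1+x)^4 = 1 + 4*x + 6*x^2 + 4*x^3 + x^4 := by ring
      rw [h]
      norm_num
  | succ n hn ih =>
      intro x hx
      have hN : (4:ℚ) ≤ (n:ℚ) := by exact_mod_cast hn
      have hx1 : (0:ℚ) ≤ 1 + x := by linarith
      have h1 := mul_le_mul_of_nonneg_right (ih x hx) hx1
      have hc4 : (0:ℚ) ≤ (n:ℚ)*((n:ℚ)-1)*((n:ℚ)-2)*((n:ℚ)-3)/24 := by
        apply div_nonneg _ (by norm_num)
        apply mul_nonneg (mul_nonneg (mul_nonneg (by linarith) (by linarith)) (by linarith))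
        linarith
      have hid : (1 + (n:ℚ)*x + (n:ℚ)*((n:ℚ)-1)/2*x^2 + (n:ℚ)*((n:ℚ)-1)*((n:ℚ)-2)/6*x^3
            + (n:ℚ)*((n:ℚ)-1)*((n:ℚ)-2)*((n:ℚ)-3)/24*x^4) * (1+x)
          = (1 + ((n+1:ℕ):ℚ)*x + ((n+1:ℕ):ℚ)*(((n+1:ℕ):ℚ)-1)/2*x^2
            + ((n+1:ℕ):ℚ)*(((n+1:ℕ):ℚ)-1)*(((n+1:ℕ):ℚ)-2)/6*x^3
            + ((n+1:ℕ):ℚ)*(((n+1:ℕ):ℚ)-1)*(((n+1:ℕ):ℚ)-2)*(((n+1:ℕ):ℚ)-3)/24*x^4)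
            + (n:ℚ)*((n:ℚ)-1)*((n:ℚ)-2)*((n:ℚ)-3)/24*x^5 := by
        push_cast
        ring
      have hx5 : (0:ℚ) ≤ (n:ℚ)*((n:ℚ)-1)*((n:ℚ)-2)*((n:ℚ)-3)/24*x^5 :=
        mul_nonneg hc4 (by positivity)
      calc 1 + ((n+1:ℕ):ℚ)*x + ((n+1:ℕ):ℚ)*(((n+1:ℕ):ℚ)-1)/2*x^2
            + ((n+1:ℕ):ℚ)*(((n+1:ℕ):ℚ)-1)*(((n+1:ℕ):ℚ)-2)/6*x^3
            + ((n+1:ℕ):ℚ)*(((n+1:ℕ):ℚ)-1)*(((n+1:ℕ):ℚ)-2)*(((n+1:ℕ):ℚ)-3)/24*x^4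
          ≤ (1 + (n:ℚ)*x + (n:ℚ)*((n:ℚ)-1)/2*x^2 + (n:ℚ)*((n:ℚ)-1)*((n:ℚ)-2)/6*x^3
            + (n:ℚ)*((n:ℚ)-1)*((n:ℚ)-2)*((n:ℚ)-3)/24*x^4) * (1+x) := by
            rw [hid]; linarith
        _ ≤ (1+x)^n * (1+x) := h1
        _ = (1+x)^(n+1) := by ring

private lemma seven_pow (n : ℕ) (hn : 36 ≤ n) : (7:ℚ) * ((n:ℚ)-2)^n ≤ (n:ℚ)^n := by
  have hN : (36:ℚ) ≤ (n:ℚ) := by exact_mod_cast hn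
  set N := (n:ℚ) with hNdef
  have ha : (0:ℚ) < N - 2 := by linarith
  set x : ℚ := 2/(N-2) with hxdef
  have hx : (0:ℚ) ≤ x := by positivity
  have hb := bern4 n (by omega) x hx
  have hq : (0:ℚ) ≤ 368*N^3 - 2064*N^2 + 3808*N - 2304 := by
    nlinarith [pow_nonneg (by linarith : (0:ℚ) ≤ N - 36) 3, sq_nonneg (N-36),
      mul_nonneg (sq_nonneg (N-36)) (by linarith : (0:ℚ) ≤ N - 36)]
  have h7 : (7:ℚ) ≤ 1 + N*x + N*(N-1)/2*x^2 + N*(N-1)*(N-2)/6*x^3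
      + N*(N-1)*(N-2)*(N-3)/24*x^4 := by
    have hdiff : (1 + N*x + N*(N-1)/2*x^2 + N*(N-1)*(N-2)/6*x^3
        + N*(N-1)*(N-2)*(N-3)/24*x^4) - 7
        = (368*N^3 - 2064*N^2 + 3808*N - 2304) / (24*(N-2)^4) := by
      rw [hxdef]
      field_simp
      ring
    have : (0:ℚ) ≤ (368*N^3 - 2064*N^2 + 3808*N - 2304) / (24*(N-2)^4) := by
      apply div_nonneg hq (by positivity)
    linarith
  have h2 : (7:ℚ) ≤ (1+x)^n := le_trans h7 hb
  have h3 : (1:ℚ) + x = N/(N-2) := by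
    rw [hxdef]; field_simp; ring
  rw [h3] at h2
  rw [div_pow] at h2
  rw [le_div_iff₀ (by positivity)] at h2
  linarith


private lemma numL1 (s : ℚ) (hs : 6 ≤ s) :
    (s^2-2)/(7*(s^2-3)) ≤ (1/2 - 45/(71*s))^2 := by
  have hs0 : (0:ℚ) < s := by linarith
  have ht : (0:ℚ) ≤ s - 6 := by linarith
  have h3 : (0:ℚ) < s^2 - 3 := by nlinarith
  have hp : (0:ℚ) ≤ 7*(s^2-3)*(71*s-90)^2 - 20164*s^2*(s^2-2) := by
    nlinarith [pow_nonneg ht 2, pow_nonneg ht 3, pow_nonneg ht 4]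
  have key : (1/2 - 45/(71*s))^2 - (s^2-2)/(7*(s^2-3))
      = (7*(s^2-3)*(71*s-90)^2 - 20164*s^2*(s^2-2)) / (7*(s^2-3)*(20164*s^2)) := by
    field_simp
    ring
  have h0 : (0:ℚ) ≤ (7*(s^2-3)*(71*s-90)^2 - 20164*s^2*(s^2-2)) / (7*(s^2-3)*(20164*s^2)) := by
    apply div_nonneg hp
    positivity
  linarith

private lemma numL2 (s : ℚ) (hs : 6 ≤ s) :
    s^2/(7*(s^2-3)) ≤ (1/2 + 1/(4*(s+1)^2) - 45/(71*s))^2 := by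
  have hs0 : (0:ℚ) < s := by linarith
  have ht : (0:ℚ) ≤ s - 6 := by linarith
  have h3 : (0:ℚ) < s^2 - 3 := by nlinarith
  have hs1 : (0:ℚ) < s + 1 := by linarith
  have hp : (0:ℚ) ≤ 7*(s^2-3)*(142*s*(s+1)^2 + 71*s - 180*(s+1)^2)^2
      - s^2*(284*s*(s+1)^2)^2 := by
    nlinarith [pow_nonneg ht 2, pow_nonneg ht 3, pow_nonneg ht 4, pow_nonneg ht 5,
      pow_nonneg ht 6, pow_nonneg ht 7, pow_nonneg ht 8]
  have key : (1/2 + 1/(4*(s+1)^2) - 45/(71*s))^2 - s^2/(7*(s^2-3))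
      = (7*(s^2-3)*(142*s*(s+1)^2 + 71*s - 180*(s+1)^2)^2 - s^2*(284*s*(s+1)^2)^2)
        / (7*(s^2-3)*(284*s*(s+1)^2)^2) := by
    field_simp
    ring
  have h0 : (0:ℚ) ≤ (7*(s^2-3)*(142*s*(s+1)^2 + 71*s - 180*(s+1)^2)^2
      - s^2*(284*s*(s+1)^2)^2) / (7*(s^2-3)*(284*s*(s+1)^2)^2) := by
    apply div_nonneg hp
    positivity
  linarith


private lemma ee_le_final (n m : ℕ) (hn : 36 ≤ n) (hm : m ≤ n) :
    ee n m ≤ 45/(71*((Nat.sqrt n : ℕ):ℚ)) := by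
  have hn1 : 1 ≤ n := by omega
  set s := Nat.sqrt n with hsdef
  have hs6 : 6 ≤ s := Nat.le_sqrt.mpr (by omega)
  have hsq6 : (6:ℚ) ≤ (s:ℚ) := by exact_mod_cast hs6
  have hsq : ((s:ℚ))^2 ≤ (n:ℚ) := by
    have hA : s * s ≤ n := Nat.sqrt_le n
    have : ((s*s : ℕ):ℚ) ≤ (n:ℚ) := by exact_mod_cast hA
    push_cast at this
    nlinarith [this]
  have hN : (36:ℚ) ≤ (n:ℚ) := by exact_mod_cast hn
  have h2N : (0:ℚ) < 2 * (n:ℚ) - 1 := by linarith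
  have hD : (0:ℚ) ≤ 1 / (2 * (2 * (n:ℚ) - 1)) := by
    apply div_nonneg (by norm_num)
    linarith
  have h1 := ee_le_sg n hn1 m hm
  have h2 := sg_le n hn m hm
  set v := (((n - m : ℕ)):ℚ) with hv
  have hv0 : (0:ℚ) ≤ v := by positivity
  have h3 : (5*(n:ℚ) + 2*v*(s:ℚ)) / (2*(v + (s:ℚ))) ≤ 5*(n:ℚ)/(2*(s:ℚ)) := by
    rw [div_le_div_iff₀ (by positivity) (by positivity)]
    nlinarith [mul_nonneg hv0 (by nlinarith : (0:ℚ) ≤ 10*(n:ℚ) - 4*((s:ℚ))^2)]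
  have h4 : 1 / (2 * (2 * (n:ℚ) - 1)) * (5*(n:ℚ)/(2*(s:ℚ))) ≤ 45/(71*(s:ℚ)) := by
    have e1 : 1 / (2 * (2 * (n:ℚ) - 1)) * (5*(n:ℚ)/(2*(s:ℚ)))
        = 5*(n:ℚ)/(4*(s:ℚ)*(2*(n:ℚ)-1)) := by
      field_simp
      ring
    rw [e1, div_le_div_iff₀ (mul_pos (by linarith : (0:ℚ) < 4*(s:ℚ)) h2N) (by positivity)]
    nlinarith [mul_le_mul_of_nonneg_right (by linarith : 355*(n:ℚ) ≤ 720*(n:ℚ) - 180)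
      (by positivity : (0:ℚ) ≤ (s:ℚ))]
  calc ee n m ≤ 1 / (2 * (2 * (n:ℚ) - 1)) * sg n m := h1
    _ ≤ 1 / (2 * (2 * (n:ℚ) - 1)) * ((5*(n:ℚ) + 2*v*(s:ℚ)) / (2*(v + (s:ℚ)))) :=
        mul_le_mul_of_nonneg_left h2 hD
    _ ≤ 1 / (2 * (2 * (n:ℚ) - 1)) * (5*(n:ℚ)/(2*(s:ℚ))) :=
        mul_le_mul_of_nonneg_left h3 hD
    _ ≤ 45/(71*(s:ℚ)) := h4


private lemma main_reduce (n m : ℕ) (hn : 36 ≤ n) (hmn : m ≤ n)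
    (hr : ((n:ℚ)-2)^m * (((n:ℚ)-2)/((n:ℚ)-3)) ≤ (n:ℚ)^m * (rr n m)^2) :
    ∑ k ∈ Finset.range (m + 1),
        ((n : ℚ) * ((n : ℚ) - 2)) ^ k / (Nat.factorial k : ℚ) ≤
      (Nat.factorial m : ℚ) *
        (∑ k ∈ Finset.range (m + 1), (-(n : ℚ)) ^ k / (Nat.factorial k : ℚ)) ^ 2 := by
  have hN : (36:ℚ) ≤ (n:ℚ) := by exact_mod_cast hn
  have hx : (0:ℚ) < (n:ℚ) * ((n:ℚ) - 2) := by nlinarith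
  have hpos2 : (0:ℚ) < (n:ℚ)-2 := by linarith
  have hpos3 : (0:ℚ) < (n:ℚ)-3 := by linarith
  have hq0 : (0:ℚ) ≤ 1/((n:ℚ)-2) := by
    apply div_nonneg (by norm_num)
    linarith
  have hq1 : 1/((n:ℚ)-2) < 1 := by
    rw [div_lt_one (by linarith)]; linarith
  have hgeom := geom_bound ((n:ℚ) * ((n:ℚ) - 2)) (1/((n:ℚ)-2)) hx hq0 hq1 m ?side
  case side =>
    intro k hk
    have h1 : 1/((n:ℚ)-2) * ((n:ℚ) * ((n:ℚ) - 2)) = (n:ℚ) := by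
      rw [one_div, mul_comm ((n:ℚ)) ((n:ℚ)-2), ← mul_assoc,
        inv_mul_cancel₀ (ne_of_gt hpos2), one_mul]
    rw [h1]
    have : (k:ℚ) ≤ (n:ℚ) := by exact_mod_cast le_trans hk hmn
    linarith
  have hfrac : 1/(1 - 1/((n:ℚ)-2)) = ((n:ℚ)-2)/((n:ℚ)-3) := by
    have e : 1 - 1/((n:ℚ)-2) = ((n:ℚ)-3)/((n:ℚ)-2) := by
      rw [eq_div_iff (ne_of_gt hpos2), sub_mul, one_div, inv_mul_cancel₀ (ne_of_gt hpos2)]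
      ring
    rw [e, one_div_div]
  rw [hfrac] at hgeom
  have hrw := sum_eq_rr n (by omega) m
  rw [hrw]
  have hf : (0:ℚ) < (Nat.factorial m : ℚ) := by positivity
  have hsq : (((-1:ℚ))^m)^2 = 1 := by
    rw [← pow_mul, mul_comm, pow_mul]
    norm_num
  have hRHS : (Nat.factorial m : ℚ) *
      ((-1) ^ m * (n : ℚ) ^ m * rr n m / (Nat.factorial m : ℚ)) ^ 2
      = (n:ℚ)^m * ((n:ℚ)^m * (rr n m)^2) / (Nat.factorial m : ℚ) := by
    rw [div_pow, mul_pow, mul_pow, hsq, one_mul]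
    field_simp
  rw [hRHS]
  have hmul : ((n:ℚ) * ((n:ℚ) - 2))^m = (n:ℚ)^m * ((n:ℚ)-2)^m := mul_pow _ _ _
  have step : ((n:ℚ) * ((n:ℚ) - 2))^m / (Nat.factorial m : ℚ) * (((n:ℚ)-2)/((n:ℚ)-3))
      ≤ (n:ℚ)^m * ((n:ℚ)^m * (rr n m)^2) / (Nat.factorial m : ℚ) := by
    rw [hmul]
    have hcoef : (0:ℚ) ≤ (n:ℚ)^m / (Nat.factorial m : ℚ) := by positivity
    have := mul_le_mul_of_nonneg_left hr hcoef
    calc (n:ℚ)^m * ((n:ℚ)-2)^m / (Nat.factorial m : ℚ) * (((n:ℚ)-2)/((n:ℚ)-3))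
        = (n:ℚ)^m / (Nat.factorial m : ℚ) * (((n:ℚ)-2)^m * (((n:ℚ)-2)/((n:ℚ)-3))) := by
          ring
      _ ≤ (n:ℚ)^m / (Nat.factorial m : ℚ) * ((n:ℚ)^m * (rr n m)^2) := this
      _ = (n:ℚ)^m * ((n:ℚ)^m * (rr n m)^2) / (Nat.factorial m : ℚ) := by ring
  exact le_trans hgeom step


private lemma small_case (n m : ℕ) (hn : 2 ≤ n) (hlt : n < 36) (hm : m = n - 1 ∨ m = n) :
    ∑ k ∈ Finset.range (m + 1),
        ((n : ℚ) * ((n : ℚ) - 2)) ^ k / (Nat.factorial k : ℚ) ≤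
      (Nat.factorial m : ℚ) *
        (∑ k ∈ Finset.range (m + 1), (-(n : ℚ)) ^ k / (Nat.factorial k : ℚ)) ^ 2 := by
  interval_cases n <;> rcases hm with rfl | rfl <;>
    norm_num [Finset.sum_range_succ, Nat.factorial]



/-- The scalar inequality: for `n ≥ 2` and `m ∈ {n−1, n}`,
`Σ_{k=0}^{m} (n(n−2))^k/k! ≤ m! (Σ_{k=0}^{m} (−n)^k/k!)²`. -/
theorem clique_scalar_inequality (n m : ℕ) (hn : 2 ≤ n) (hm : m = n - 1 ∨ m = n) :
    ∑ k ∈ Finset.range (m + 1),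
        ((n : ℚ) * ((n : ℚ) - 2)) ^ k / (Nat.factorial k : ℚ) ≤
      (Nat.factorial m : ℚ) *
        (∑ k ∈ Finset.range (m + 1), (-(n : ℚ)) ^ k / (Nat.factorial k : ℚ)) ^ 2 := by
  by_cases hbig : 36 ≤ n
  · -- large case
    set s := Nat.sqrt n with hsdef
    have hs6 : 6 ≤ s := Nat.le_sqrt.mpr (by omega)
    have hsq6 : (6:ℚ) ≤ (s:ℚ) := by exact_mod_cast hs6
    have hN : (36:ℚ) ≤ (n:ℚ) := by exact_mod_cast hbig
    have hsqle : ((s:ℚ))^2 ≤ (n:ℚ) := by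
      have hA : s * s ≤ n := Nat.sqrt_le n
      have : ((s*s : ℕ):ℚ) ≤ (n:ℚ) := by exact_mod_cast hA
      push_cast at this
      nlinarith [this]
    have hsqge : (n:ℚ) ≤ ((s:ℚ))^2 + 2*(s:ℚ) := by
      have hB : n < (s+1) * (s+1) := Nat.lt_succ_sqrt n
      have e : (s+1)*(s+1) = s*s+2*s+1 := by ring
      rw [e] at hB
      have h3 : n ≤ s*s + 2*s := by omega
      have : ((n:ℕ):ℚ) ≤ ((s*s + 2*s : ℕ):ℚ) := by exact_mod_cast h3
      push_cast at this
      nlinarith [this]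
    have hsq3 : (0:ℚ) < (s:ℚ)^2 - 3 := by nlinarith
    have hpos2 : (0:ℚ) < (n:ℚ)-2 := by linarith
    have hpos3 : (0:ℚ) < (n:ℚ)-3 := by linarith
    have hEpos : (0:ℚ) < 45/(71*(s:ℚ)) := by positivity
    have hEsmall : 45/(71*(s:ℚ)) ≤ 45/426 := by
      apply div_le_div_of_nonneg_left (by norm_num) (by norm_num)
      linarith
    rcases hm with hm1 | hm1
    · -- m = n - 1
      subst hm1
      have hmn : n - 1 ≤ n := by omega
      apply main_reduce n (n-1) hbig hmn
      -- lower bound on rr n (n-1)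
      have hcast : ((n - 1 : ℕ):ℚ) = (n:ℚ) - 1 := by
        rw [Nat.cast_sub (by omega)]
        norm_num
      have hcenter := (rr_center n (by omega) (n-1)).1
      rw [hcast] at hcenter
      have hee := ee_le_final n (n-1) hbig hmn
      have hcen_eq : (n:ℚ) / ((n:ℚ) + ((n:ℚ) - 1)) = (n:ℚ)/(2*(n:ℚ)-1) := by
        norm_num
        ring_nf
      rw [hcen_eq] at hcenter
      have hcenter2 : 1/2 + 1/(4*((s:ℚ)+1)^2) ≤ (n:ℚ)/(2*(n:ℚ)-1) := by
        have h2N : (0:ℚ) < 2*(n:ℚ)-1 := by linarith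
        have e1 : (n:ℚ)/(2*(n:ℚ)-1) - 1/2 = 1/(2*(2*(n:ℚ)-1)) := by
          rw [div_sub_div _ _ (ne_of_gt h2N) (by norm_num : (2:ℚ) ≠ 0),
            div_eq_div_iff (mul_pos h2N two_pos).ne' (mul_pos two_pos h2N).ne']; ring
        have e2 : 1/(4*((s:ℚ)+1)^2) ≤ 1/(2*(2*(n:ℚ)-1)) := by
          apply div_le_div_of_nonneg_left (by norm_num) (by positivity)
          nlinarith
        linarith
      have hlow : 1/2 + 1/(4*((s:ℚ)+1)^2) - 45/(71*(s:ℚ)) ≤ rr n (n-1) := by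
        linarith
      have hbpos : (0:ℚ) ≤ 1/2 + 1/(4*((s:ℚ)+1)^2) - 45/(71*(s:ℚ)) := by
        have : (0:ℚ) ≤ 1/(4*((s:ℚ)+1)^2) := by positivity
        nlinarith [hEsmall]
      have hrsq : (1/2 + 1/(4*((s:ℚ)+1)^2) - 45/(71*(s:ℚ)))^2 ≤ (rr n (n-1))^2 := by
        apply pow_le_pow_left₀ hbpos hlow
      have hL2 := numL2 (s:ℚ) hsq6
      -- chain
      have hfrac : (n:ℚ)/(7*((n:ℚ)-3)) ≤ ((s:ℚ))^2/(7*((s:ℚ)^2-3)) := by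
        rw [div_le_div_iff₀ (by linarith) (by linarith)]
        nlinarith
      have h7 := seven_pow n hbig
      have hn1 : (n - 1) + 1 = n := by omega
      have hpowsplit : ((n:ℚ)-2)^n = ((n:ℚ)-2)^(n-1) * ((n:ℚ)-2) := by
        have h := pow_succ ((n:ℚ)-2) (n-1)
        rw [hn1] at h
        exact h
      have hpowsplitN : (n:ℚ)^n = (n:ℚ)^(n-1) * (n:ℚ) := by
        have h := pow_succ ((n:ℚ)) (n-1)
        rw [hn1] at h
        exact h
      have hNpow_nonneg : (0:ℚ) ≤ (n:ℚ)^(n-1) := by positivity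
      have key : ((n:ℚ)-2)^(n-1) * (((n:ℚ)-2)/((n:ℚ)-3))
          ≤ (n:ℚ)^(n-1) * ((n:ℚ)/(7*((n:ℚ)-3))) := by
        have e3 : ((n:ℚ)-2)^(n-1) * (((n:ℚ)-2)/((n:ℚ)-3))
            = (7 * ((n:ℚ)-2)^n) * (1/(7*((n:ℚ)-3))) := by
          rw [hpowsplit]
          field_simp
        have e4 : (n:ℚ)^(n-1) * ((n:ℚ)/(7*((n:ℚ)-3)))
            = (n:ℚ)^n * (1/(7*((n:ℚ)-3))) := by
          rw [hpowsplitN]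
          ring
        rw [e3, e4]
        apply mul_le_mul_of_nonneg_right h7
        positivity
      calc ((n:ℚ)-2)^(n-1) * (((n:ℚ)-2)/((n:ℚ)-3))
          ≤ (n:ℚ)^(n-1) * ((n:ℚ)/(7*((n:ℚ)-3))) := key
        _ ≤ (n:ℚ)^(n-1) * (((s:ℚ))^2/(7*((s:ℚ)^2-3))) :=
            mul_le_mul_of_nonneg_left hfrac hNpow_nonneg
        _ ≤ (n:ℚ)^(n-1) * ((1/2 + 1/(4*((s:ℚ)+1)^2) - 45/(71*(s:ℚ)))^2) :=
            mul_le_mul_of_nonneg_left hL2 hNpow_nonneg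
        _ ≤ (n:ℚ)^(n-1) * (rr n (n-1))^2 :=
            mul_le_mul_of_nonneg_left hrsq hNpow_nonneg
    · -- m = n
      have hgoal : ((n:ℚ)-2)^n * (((n:ℚ)-2)/((n:ℚ)-3)) ≤ (n:ℚ)^n * (rr n n)^2 := ?_
      · rw [hm1]
        exact main_reduce n n hbig le_rfl hgoal
      have hcenter := (rr_center n (by omega) n).1
      have hee := ee_le_final n n hbig le_rfl
      have hcen_eq : (n:ℚ) / ((n:ℚ) + ((n:ℕ):ℚ)) = 1/2 := by
        rw [div_eq_div_iff (ne_of_gt (by push_cast; linarith : (0:ℚ) < (n:ℚ) + ((n:ℕ):ℚ)))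
          (by norm_num : (2:ℚ) ≠ 0)]
        push_cast
        ring
      rw [hcen_eq] at hcenter
      have hlow : 1/2 - 45/(71*(s:ℚ)) ≤ rr n n := by linarith
      have hbpos : (0:ℚ) ≤ 1/2 - 45/(71*(s:ℚ)) := by nlinarith [hEsmall]
      have hrsq : (1/2 - 45/(71*(s:ℚ)))^2 ≤ (rr n n)^2 :=
        pow_le_pow_left₀ hbpos hlow 2
      have hL1 := numL1 (s:ℚ) hsq6
      have hfrac : ((n:ℚ)-2)/(7*((n:ℚ)-3)) ≤ ((s:ℚ)^2-2)/(7*((s:ℚ)^2-3)) := by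
        rw [div_le_div_iff₀ (by linarith) (by linarith)]
        nlinarith
      have h7 := seven_pow n hbig
      have hNpow_nonneg : (0:ℚ) ≤ (n:ℚ)^n := by positivity
      have key : ((n:ℚ)-2)^n * (((n:ℚ)-2)/((n:ℚ)-3))
          ≤ (n:ℚ)^n * (((n:ℚ)-2)/(7*((n:ℚ)-3))) := by
        have e3 : ((n:ℚ)-2)^n * (((n:ℚ)-2)/((n:ℚ)-3))
            = (7 * ((n:ℚ)-2)^n) * (((n:ℚ)-2)/(7*((n:ℚ)-3))) := by
          field_simp
        rw [e3]
        apply mul_le_mul_of_nonneg_right h7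
        positivity
      calc ((n:ℚ)-2)^n * (((n:ℚ)-2)/((n:ℚ)-3))
          ≤ (n:ℚ)^n * (((n:ℚ)-2)/(7*((n:ℚ)-3))) := key
        _ ≤ (n:ℚ)^n * (((s:ℚ)^2-2)/(7*((s:ℚ)^2-3))) :=
            mul_le_mul_of_nonneg_left hfrac hNpow_nonneg
        _ ≤ (n:ℚ)^n * ((1/2 - 45/(71*(s:ℚ)))^2) :=
            mul_le_mul_of_nonneg_left hL1 hNpow_nonneg
        _ ≤ (n:ℚ)^n * (rr n n)^2 :=
            mul_le_mul_of_nonneg_left hrsq hNpow_nonneg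
  · -- small case
    exact small_case n m hn (by omega) hm
end

section
/- Let n ≥ 2 and let L be the Laplacian of the complete graph K_n, i.e., L = n·I_n − J_n. Then per(L ∘ L) ≤ per(L)². -/
open Matrix Finset

namespace CGPerm

lemma prod_ite_fix {n : ℕ} (σ : Equiv.Perm (Fin n)) (a : ℝ) (t : Finset (Fin n)) :
    (∏ i ∈ t, (if σ i = i then a else 0)) = if (∀ i ∈ t, σ i = i) then a ^ t.card else 0 := by
  by_cases h : ∀ i ∈ t, σ i = i
  · rw [if_pos h, Finset.prod_congr rfl (fun i hi => if_pos (h i hi)), prod_const]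
  · rw [if_neg h]
    push_neg at h
    obtain ⟨i, hi, hne⟩ := h
    exact Finset.prod_eq_zero hi (if_neg hne)

lemma card_fixing {n : ℕ} (t : Finset (Fin n)) :
    (univ.filter fun σ : Equiv.Perm (Fin n) => ∀ i ∈ t, σ i = i).card
      = Nat.factorial (n - t.card) := by
  rw [← Fintype.card_subtype]
  have e1 : {σ : Equiv.Perm (Fin n) // ∀ i ∈ t, σ i = i}
      ≃ {σ : Equiv.Perm (Fin n) // ∀ i, ¬(i ∉ t) → σ i = i} :=
    Equiv.subtypeEquivRight (by intro σ; simp [not_not])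
  have e2 := (Equiv.Perm.subtypeEquivSubtypePerm (fun i : Fin n => i ∉ t)).symm
  rw [Fintype.card_congr (e1.trans e2), Fintype.card_perm]
  congr 1
  rw [Fintype.card_subtype_compl]
  simp

lemma permanent_diag_add_const (n : ℕ) (a b : ℝ) :
    (Matrix.of fun i j : Fin n => (if i = j then a else 0) + b).permanent
      = ∑ k ∈ range (n+1), (n.descFactorial (n-k) : ℝ) * a ^ k * b ^ (n-k) := by
  unfold Matrix.permanent
  have step1 : ∀ σ : Equiv.Perm (Fin n),
      (∏ i, (Matrix.of fun i j : Fin n => (if i = j then a else 0) + b) (σ i) i)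
        = ∑ t ∈ (univ : Finset (Fin n)).powerset,
            (if (∀ i ∈ t, σ i = i) then a ^ t.card else 0) * b ^ (n - t.card) := by
    intro σ
    have : (∏ i, (Matrix.of fun i j : Fin n => (if i = j then a else 0) + b) (σ i) i)
        = ∏ i, ((if σ i = i then a else 0) + b) := by
      refine Finset.prod_congr rfl fun i _ => ?_
      simp only [Matrix.of_apply]
    rw [this, Finset.prod_add]
    refine sum_congr rfl fun t ht => ?_
    rw [prod_ite_fix, prod_const]
    congr 2
    rw [card_sdiff_of_subset (mem_powerset.mp ht), card_univ, Fintype.card_fin]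
  simp_rw [step1]
  rw [Finset.sum_comm]
  have step2 : ∀ t ∈ (univ : Finset (Fin n)).powerset,
      (∑ σ : Equiv.Perm (Fin n), (if (∀ i ∈ t, σ i = i) then a ^ t.card else 0) * b ^ (n - t.card))
        = (Nat.factorial (n - t.card) : ℝ) * a ^ t.card * b ^ (n - t.card) := by
    intro t _
    rw [← Finset.sum_mul, Finset.sum_ite, Finset.sum_const, Finset.sum_const_zero, add_zero,
      card_fixing, nsmul_eq_mul]
  rw [Finset.sum_congr rfl step2]
  rw [Finset.powerset_card_disjiUnion]; erw [Finset.sum_disjiUnion]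
  rw [card_univ, Fintype.card_fin]
  refine sum_congr rfl fun k hk => ?_
  have hkn : k ≤ n := Nat.lt_succ_iff.mp (mem_range.mp hk)
  have hconst : ∀ t ∈ (univ : Finset (Fin n)).powersetCard k,
      (Nat.factorial (n - t.card) : ℝ) * a ^ t.card * b ^ (n - t.card)
        = (Nat.factorial (n - k) : ℝ) * a ^ k * b ^ (n - k) := by
    intro t ht
    have := (mem_powersetCard.mp ht).2
    rw [this]
  rw [Finset.sum_congr rfl hconst, Finset.sum_const, card_powersetCard, card_univ,
    Fintype.card_fin, nsmul_eq_mul]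
  have : (n.descFactorial (n-k) : ℝ) = (n.choose k : ℝ) * (Nat.factorial (n-k) : ℝ) := by
    rw [Nat.descFactorial_eq_factorial_mul_choose, Nat.choose_symm hkn]
    push_cast; ring
  rw [this]; ring

def gseq (n : ℕ) : ℕ → ℝ
  | 0 => 1
  | (j+1) => (n:ℝ)^(j+1) - (j+1 : ℕ) * gseq n j

lemma gseq_eq_sum (n : ℕ) (j : ℕ) :
    gseq n j = ∑ k ∈ range (j+1), (-1:ℝ)^(j-k) * (j.descFactorial (j-k) : ℝ) * (n:ℝ)^k := by
  induction j with
  | zero => simp [gseq]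
  | succ j ih =>
    rw [Finset.sum_range_succ]
    have h1 : ∀ k ∈ range (j+1),
        (-1:ℝ)^(j+1-k) * ((j+1).descFactorial (j+1-k) : ℝ) * (n:ℝ)^k
          = -((j+1:ℕ):ℝ) * ((-1:ℝ)^(j-k) * (j.descFactorial (j-k) : ℝ) * (n:ℝ)^k) := by
      intro k hk
      have hkj : k ≤ j := Nat.lt_succ_iff.mp (mem_range.mp hk)
      have e1 : j + 1 - k = (j - k) + 1 := by omega
      rw [e1, pow_succ, Nat.succ_descFactorial_succ]
      push_cast
      ring
    rw [Finset.sum_congr rfl h1, ← Finset.mul_sum]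
    simp [gseq, ih]
    ring

lemma keypoly (nr j : ℝ) (hj : 0 ≤ j) (h : j + 2 ≤ nr) :
    0 ≤ (nr+j)^2*((nr+j+2)^2*(nr^2-(j+2)*nr) - nr^2*(nr*(nr+j+2)-2*(j+2)))
        + (j+2)*(j+1)*(nr+j+2)^2*(nr*(nr+j)-2*j) := by
  obtain ⟨t, ht, rfl⟩ : ∃ t, 0 ≤ t ∧ nr = t + j + 2 := ⟨nr - j - 2, by linarith, by ring⟩
  nlinarith [mul_nonneg (pow_nonneg ht 1) (pow_nonneg hj 1),
    mul_nonneg (pow_nonneg ht 1) (pow_nonneg hj 2),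
    mul_nonneg (pow_nonneg ht 1) (pow_nonneg hj 3),
    mul_nonneg (pow_nonneg ht 1) (pow_nonneg hj 4),
    mul_nonneg (pow_nonneg ht 2) (pow_nonneg hj 1),
    mul_nonneg (pow_nonneg ht 2) (pow_nonneg hj 2),
    mul_nonneg (pow_nonneg ht 2) (pow_nonneg hj 3),
    mul_nonneg (pow_nonneg ht 3) (pow_nonneg hj 1),
    mul_nonneg (pow_nonneg ht 3) (pow_nonneg hj 2),
    mul_nonneg (pow_nonneg ht 4) (pow_nonneg hj 1),
    pow_nonneg ht 2, pow_nonneg ht 3, pow_nonneg ht 4,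
    pow_nonneg hj 2, pow_nonneg hj 3, pow_nonneg hj 4]

lemma gseq_lb (n : ℕ) (hn : 2 ≤ n) :
    ∀ j, j ≤ n → (n:ℝ)^j * ((n:ℝ)*((n:ℝ)+j) - 2*j) ≤ ((n:ℝ)+j)^2 * gseq n j := by
  have hn2 : (2:ℝ) ≤ (n:ℝ) := by exact_mod_cast hn
  intro j
  induction j using Nat.strong_induction_on with
  | _ j ih =>
    match j with
    | 0 => intro _; simp [gseq, sq]
    | 1 =>
      intro _
      have : gseq n 1 = (n:ℝ) - 1 := by simp [gseq]
      rw [this]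
      push_cast
      nlinarith
    | (j+2) =>
      intro hj2n
      have hIH := ih j (by omega) (by omega)
      have hg2 : gseq n (j+2)
          = (n:ℝ)^j*((n:ℝ)^2 - ((j:ℝ)+2)*(n:ℝ)) + ((j:ℝ)+2)*((j:ℝ)+1)*gseq n j := by
        show (n:ℝ)^(j+2) - ((j+2:ℕ):ℝ) * gseq n (j+1) = _
        have : gseq n (j+1) = (n:ℝ)^(j+1) - ((j+1:ℕ):ℝ) * gseq n j := rfl
        rw [this]
        push_cast
        ring
      have hj0 : (0:ℝ) ≤ (j:ℝ) := by positivity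
      have hj2 : ((j:ℝ)+2) ≤ (n:ℝ) := by
        have : ((j+2:ℕ):ℝ) ≤ (n:ℝ) := by exact_mod_cast hj2n
        push_cast at this; linarith
      have key := keypoly (n:ℝ) (j:ℝ) hj0 hj2
      have hN : (0:ℝ) ≤ (n:ℝ)^j := by positivity
      have fact1 := mul_nonneg hN key
      have hc : (0:ℝ) ≤ ((j:ℝ)+2)*((j:ℝ)+1)*((n:ℝ)+(j:ℝ)+2)^2 := by positivity
      have fact2 := mul_nonneg hc (sub_nonneg.mpr hIH)
      have hpos : (0:ℝ) < ((n:ℝ)+(j:ℝ))^2 := by positivity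
      rw [← mul_le_mul_iff_right₀ hpos]
      have hcast : ((j+2:ℕ):ℝ) = (j:ℝ)+2 := by push_cast; ring
      have hpow : (n:ℝ)^(j+2) = (n:ℝ)^j * (n:ℝ)^2 := by rw [pow_add]
      rw [hg2, hcast, hpow]
      nlinarith [fact1, fact2]

lemma gseq_final_lb (n : ℕ) (hn : 2 ≤ n) :
    (n:ℝ)^n * ((n:ℝ)-1) ≤ 2*(n:ℝ) * gseq n n := by
  have h := gseq_lb n hn n le_rfl
  have hnpos : (0:ℝ) < (n:ℝ) := by positivity
  have h2 : (0:ℝ) < 2*(n:ℝ) := by linarith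
  rw [← mul_le_mul_iff_right₀ h2]
  nlinarith [h]

lemma geom_bound (r : ℝ) (h0 : 0 ≤ r) (h1 : r < 1) (m : ℕ) :
    ∑ j ∈ range m, r^j ≤ (1-r)⁻¹ := by
  have hpos : (0:ℝ) < 1 - r := by linarith
  rw [geom_sum_eq (ne_of_lt h1), show (r^m - 1)/(r - 1) = (1 - r^m)/(1-r) by
    rw [← neg_div_neg_eq]; ring_nf]
  rw [div_le_iff₀ hpos, inv_mul_cancel₀ (ne_of_gt hpos)]
  have := pow_nonneg h0 m
  linarith

lemma Psum_ub (n : ℕ) (hn : 7 ≤ n) :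
    ∑ k ∈ range (n+1), (n.descFactorial (n-k) : ℝ) * ((n:ℝ)^2-2*(n:ℝ))^k
      ≤ ((n:ℝ)^2-2*(n:ℝ))^n * (((n:ℝ)-2)/((n:ℝ)-3)) := by
  have hn7 : (7:ℝ) ≤ (n:ℝ) := by exact_mod_cast hn
  have hx : (0:ℝ) < (n:ℝ)^2-2*(n:ℝ) := by nlinarith
  have hn2 : (0:ℝ) < (n:ℝ)-2 := by linarith
  have hn2' : ((n:ℝ)-2) ≠ 0 := ne_of_gt hn2
  set x : ℝ := (n:ℝ)^2-2*(n:ℝ) with hxdef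
  have hxfac : x = (n:ℝ) * ((n:ℝ)-2) := by rw [hxdef]; ring
  set r : ℝ := (((n:ℝ)-2))⁻¹ with hrdef
  have hr0 : 0 ≤ r := by rw [hrdef]; positivity
  have hr1 : r < 1 := by rw [hrdef, inv_lt_one_iff₀]; right; linarith
  have hxr : x * r = (n:ℝ) := by rw [hxfac, hrdef]; field_simp
  calc ∑ k ∈ range (n+1), (n.descFactorial (n-k) : ℝ) * x^k
      ≤ ∑ k ∈ range (n+1), (n:ℝ)^(n-k) * x^k := by
        refine Finset.sum_le_sum fun k _ => ?_
        have h2 : (n.descFactorial (n-k) : ℝ) ≤ (n:ℝ)^(n-k) := by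
          exact_mod_cast Nat.descFactorial_le_pow n (n-k)
        exact mul_le_mul_of_nonneg_right h2 (by positivity)
    _ = ∑ j ∈ range (n+1), x^n * r^j := by
        rw [← Finset.sum_range_reflect]
        refine Finset.sum_congr rfl fun j hj => ?_
        have hjn : j ≤ n := Nat.lt_succ_iff.mp (mem_range.mp hj)
        have h1 : n + 1 - 1 - j = n - j := by omega
        have h2 : n - (n - j) = j := by omega
        rw [h1, h2]
        calc (n:ℝ)^j * x^(n-j) = (x*r)^j * x^(n-j) := by rw [hxr]
          _ = (x^j * x^(n-j)) * r^j := by rw [mul_pow]; ring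
          _ = x^n * r^j := by
              congr 2
              rw [← pow_add]
              congr 1
              omega
    _ = x^n * ∑ j ∈ range (n+1), r^j := by rw [Finset.mul_sum]
    _ ≤ x^n * (1-r)⁻¹ := mul_le_mul_of_nonneg_left (geom_bound r hr0 hr1 (n+1)) (by positivity)
    _ = x^n * (((n:ℝ)-2)/((n:ℝ)-3)) := by
        congr 1
        have h3 : (1 - r) = ((n:ℝ)-3)/((n:ℝ)-2) := by
          rw [hrdef]; field_simp; ring
        rw [h3, inv_div]

lemma main_ineq_large (n : ℕ) (hn : 7 ≤ n) :
    ∑ k ∈ range (n+1), (n.descFactorial (n-k) : ℝ) * ((n:ℝ)^2-2*(n:ℝ))^k ≤ (gseq n n)^2 := by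
  have hn7 : (7:ℝ) ≤ (n:ℝ) := by exact_mod_cast hn
  have hnpos : (0:ℝ) < (n:ℝ) := by linarith
  have hNn : (0:ℝ) < (n:ℝ)^n := by positivity
  -- exp bounds
  have he1 : (2.7182818283:ℝ) < Real.exp 1 := Real.exp_one_gt_d9
  have he2 : (7.389:ℝ) < Real.exp 2 := by
    have h : Real.exp 2 = Real.exp 1 * Real.exp 1 := by
      rw [← Real.exp_add]; norm_num
    nlinarith
  have hEinv : (0:ℝ) < Real.exp (-2) := Real.exp_pos _
  have hEE : Real.exp (-2) * Real.exp 2 = 1 := by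
    rw [← Real.exp_add]; norm_num
  -- (n-2)^n ≤ exp(-2) * n^n
  have he3 : ((n:ℝ)-2)^n ≤ Real.exp (-2) * (n:ℝ)^n := by
    have h1 : ((n:ℝ)-2)/(n:ℝ) ≤ Real.exp (-2/(n:ℝ)) := by
      have := Real.add_one_le_exp (-2/(n:ℝ))
      have h2 : -2/(n:ℝ) + 1 = ((n:ℝ)-2)/(n:ℝ) := by field_simp; ring
      linarith [h2 ▸ this]
    have h0 : (0:ℝ) ≤ ((n:ℝ)-2)/(n:ℝ) := div_nonneg (by linarith) (by linarith)
    have h3 := pow_le_pow_left₀ h0 h1 n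
    have h4 : (Real.exp (-2/(n:ℝ)))^n = Real.exp (-2) := by
      rw [← Real.exp_nat_mul]
      congr 1
      field_simp
    rw [h4] at h3
    have h5 : (((n:ℝ)-2)/(n:ℝ))^n = ((n:ℝ)-2)^n / (n:ℝ)^n := by rw [div_pow]
    rw [h5, div_le_iff₀ hNn] at h3
    linarith [h3]
  -- key polynomial inequality
  have h70 : (0:ℝ) ≤ (n:ℝ) - 7 := by linarith
  have hkey : 4*(n:ℝ)^2*((n:ℝ)-2) ≤ Real.exp 2 * (((n:ℝ)-1)^2*((n:ℝ)-3)) := by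
    have hpos3 : (0:ℝ) ≤ ((n:ℝ)-1)^2*((n:ℝ)-3) := by nlinarith [sq_nonneg ((n:ℝ)-1)]
    nlinarith [mul_nonneg (mul_nonneg h70 h70) h70, sq_nonneg ((n:ℝ)-7), h70,
      mul_nonneg hpos3 (le_of_lt (lt_trans (by norm_num) he2)), he2]
  -- scalar: exp(-2)*(n-2)*4n² ≤ (n-1)²(n-3)
  have hscal : Real.exp (-2) * (4*(n:ℝ)^2*((n:ℝ)-2)) ≤ ((n:ℝ)-1)^2*((n:ℝ)-3) := by
    have := mul_le_mul_of_nonneg_left hkey (le_of_lt hEinv)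
    calc Real.exp (-2) * (4*(n:ℝ)^2*((n:ℝ)-2))
        ≤ Real.exp (-2) * (Real.exp 2 * (((n:ℝ)-1)^2*((n:ℝ)-3))) := this
      _ = (Real.exp (-2) * Real.exp 2) * (((n:ℝ)-1)^2*((n:ℝ)-3)) := by ring
      _ = ((n:ℝ)-1)^2*((n:ℝ)-3) := by rw [hEE]; ring
  -- assemble
  have hP := Psum_ub n hn
  have hx : (0:ℝ) < (n:ℝ)^2-2*(n:ℝ) := by nlinarith
  have hn3 : (0:ℝ) < (n:ℝ)-3 := by linarith
  have hQ := gseq_final_lb n (by omega)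
  have hQnn : (0:ℝ) ≤ (n:ℝ)^n * ((n:ℝ)-1) := mul_nonneg (by positivity) (by linarith)
  have hq2 : ((n:ℝ)^n * ((n:ℝ)-1))^2 ≤ (2*(n:ℝ))^2 * (gseq n n)^2 := by
    have := mul_self_le_mul_self hQnn hQ
    calc ((n:ℝ)^n * ((n:ℝ)-1))^2 = ((n:ℝ)^n * ((n:ℝ)-1)) * ((n:ℝ)^n * ((n:ℝ)-1)) := sq ..
      _ ≤ (2*(n:ℝ) * gseq n n) * (2*(n:ℝ) * gseq n n) := this
      _ = (2*(n:ℝ))^2 * (gseq n n)^2 := by ring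
  have h4n : (0:ℝ) < 4*(n:ℝ)^2 := by positivity
  -- xⁿ(n-2)/(n-3) * 4n² ≤ (nⁿ(n-1))²
  have hstep : ((n:ℝ)^2-2*(n:ℝ))^n * (((n:ℝ)-2)/((n:ℝ)-3)) * (4*(n:ℝ)^2)
      ≤ ((n:ℝ)^n * ((n:ℝ)-1))^2 := by
    have hxn : ((n:ℝ)^2-2*(n:ℝ))^n = (n:ℝ)^n * ((n:ℝ)-2)^n := by
      rw [show (n:ℝ)^2-2*(n:ℝ) = (n:ℝ)*((n:ℝ)-2) by ring, mul_pow]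
    rw [hxn]
    have hb1 : (n:ℝ)^n * ((n:ℝ)-2)^n * (((n:ℝ)-2)/((n:ℝ)-3)) * (4*(n:ℝ)^2)
        ≤ (n:ℝ)^n * (Real.exp (-2) * (n:ℝ)^n) * (((n:ℝ)-2)/((n:ℝ)-3)) * (4*(n:ℝ)^2) := by
      have hcoef : (0:ℝ) ≤ (n:ℝ)^n * ((((n:ℝ)-2)/((n:ℝ)-3)) * (4*(n:ℝ)^2)) :=
        mul_nonneg (by positivity)
          (mul_nonneg (div_nonneg (by linarith) (by linarith)) (by positivity))
      nlinarith [mul_le_mul_of_nonneg_left he3 hcoef]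
    refine hb1.trans ?_
    have hgoal : Real.exp (-2) * (((n:ℝ)-2)/((n:ℝ)-3)) * (4*(n:ℝ)^2) ≤ ((n:ℝ)-1)^2 := by
      rw [show Real.exp (-2) * (((n:ℝ)-2)/((n:ℝ)-3)) * (4*(n:ℝ)^2)
          = (Real.exp (-2) * (4*(n:ℝ)^2*((n:ℝ)-2)))/((n:ℝ)-3) by ring]
      rw [div_le_iff₀ hn3]
      exact hscal
    have hnn2 : (0:ℝ) ≤ ((n:ℝ)^n)^2 := by positivity
    calc (n:ℝ)^n * (Real.exp (-2) * (n:ℝ)^n) * (((n:ℝ)-2)/((n:ℝ)-3)) * (4*(n:ℝ)^2)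
        = ((n:ℝ)^n)^2 * (Real.exp (-2) * (((n:ℝ)-2)/((n:ℝ)-3)) * (4*(n:ℝ)^2)) := by ring
      _ ≤ ((n:ℝ)^n)^2 * ((n:ℝ)-1)^2 := mul_le_mul_of_nonneg_left hgoal hnn2
      _ = ((n:ℝ)^n * ((n:ℝ)-1))^2 := by ring
  refine hP.trans ?_
  have h1 : ((n:ℝ)^2-2*(n:ℝ))^n * (((n:ℝ)-2)/((n:ℝ)-3))
      ≤ ((n:ℝ)^n * ((n:ℝ)-1))^2 / (4*(n:ℝ)^2) := by
    rw [le_div_iff₀ h4n]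
    exact hstep
  refine h1.trans ?_
  rw [div_le_iff₀ h4n]
  nlinarith [hq2]

lemma lap_top (n : ℕ) (hn : 1 ≤ n) :
    lap (⊤ : SimpleGraph (Fin n))
      = Matrix.of fun i j : Fin n => (if i = j then (n:ℝ) else 0) + (-1) := by
  ext i j
  have hd : ∀ (inst : Fintype ((⊤ : SimpleGraph (Fin n)).neighborSet i)),
      @SimpleGraph.degree (Fin n) ⊤ i inst = n - 1 := by
    intro inst
    rw [Subsingleton.elim inst (SimpleGraph.neighborSetFintype ⊤ i)]
    rw [SimpleGraph.complete_graph_degree, Fintype.card_fin]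
  simp only [lap, SimpleGraph.lapMatrix, Matrix.sub_apply, SimpleGraph.degMatrix,
    Matrix.diagonal_apply, SimpleGraph.adjMatrix_apply, SimpleGraph.top_adj,
    Matrix.of_apply, hd]
  by_cases h : i = j
  · rw [if_pos h, if_pos h, if_neg (by simp [h])]
    rw [Nat.cast_sub hn]
    push_cast
    ring
  · rw [if_neg h, if_neg h, if_pos h]
    ring

lemma had_top (n : ℕ) (hn : 1 ≤ n) :
    Matrix.hadamard (lap (⊤ : SimpleGraph (Fin n))) (lap (⊤ : SimpleGraph (Fin n)))
      = Matrix.of fun i j : Fin n => (if i = j then ((n:ℝ)^2 - 2*(n:ℝ)) else 0) + 1 := by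
  rw [lap_top n hn]
  ext i j
  simp only [Matrix.hadamard_apply, Matrix.of_apply]
  by_cases h : i = j
  · rw [if_pos h, if_pos h]; ring
  · rw [if_neg h, if_neg h]; ring

end CGPerm

open CGPerm

/-- For the Laplacian `L = n·I_n − J_n` of the complete graph `K_n` (`n ≥ 2`),
`per(L ∘ L) ≤ per(L)²`. -/
theorem complete_graph_permanent_hadamard_le_sq (n : ℕ) (hn : 2 ≤ n) :
    (Matrix.hadamard (lap (⊤ : SimpleGraph (Fin n))) (lap (⊤ : SimpleGraph (Fin n)))).permanent ≤
      (lap (⊤ : SimpleGraph (Fin n))).permanent ^ 2 := by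
  have hn1 : 1 ≤ n := by omega
  rw [had_top n hn1, lap_top n hn1]
  rw [permanent_diag_add_const, permanent_diag_add_const]
  have hone : ∀ k ∈ Finset.range (n+1),
      (n.descFactorial (n-k):ℝ) * ((n:ℝ)^2-2*(n:ℝ))^k * (1:ℝ)^(n-k)
        = (n.descFactorial (n-k):ℝ) * ((n:ℝ)^2-2*(n:ℝ))^k := by
    intro k _; rw [one_pow, mul_one]
  rw [Finset.sum_congr rfl hone]
  have hQ : ∑ k ∈ Finset.range (n+1), (n.descFactorial (n-k):ℝ) * (n:ℝ)^k * (-1:ℝ)^(n-k)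
      = gseq n n := by
    rw [gseq_eq_sum]
    exact Finset.sum_congr rfl fun k _ => by ring
  rw [hQ]
  rcases lt_or_ge n 7 with h7 | h7
  · interval_cases n <;> norm_num [Finset.sum_range_succ, Nat.descFactorial, gseq]
  · exact main_ineq_large n h7
end
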